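/- arXiv:1808.02359 — 5 statements merged into one kernel-verified Lean document; each statement's English description precedes it below -/
import Mathlib

section
/- Let G be a graph on n vertices and let G'' be its pendant-augmented graph. Then every nonempty path P in G'' satisfies |N_{G''}(V(P))| ≤ n + r, where r = |V(P) ∩ V(G)| is the number of original vertices of G on P. -/
open SimpleGraph

/-- The open neighborhood of a vertex set `S`: vertices outside `S` adjacent to some
vertex of `S`. -/
def openNbhd {V : Type*} (G : SimpleGraph V) (S : Set V) : Set V :=
  {v | v ∉ S ∧ ∃ w ∈ S, G.Adj v w}

/-- The pendant-augmented graph `G''` of `G`: for each vertex `v` of `G`, two new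
vertices (modelled as `(v, false)` and `(v, true)`) are added, adjacent only to `v`. -/
def pendantAug {V : Type*} (G : SimpleGraph V) : SimpleGraph (V ⊕ (V × Bool)) :=
  SimpleGraph.fromRel (fun a b =>
    match a, b with
    | Sum.inl v, Sum.inl w => G.Adj v w
    | Sum.inl v, Sum.inr (w, _) => v = w
    | _, _ => False)

/-- Every nonempty path `P` in the pendant-augmented graph `G''` of a graph `G` on `n`
vertices has at most `n + r` neighbors, where `r` is the number of original vertices
of `G` on `P`. -/
theorem stmt_1 {V : Type*} [Fintype V] (G : SimpleGraph V)
    (u v : V ⊕ (V × Bool)) (p : (pendantAug G).Walk u v) (hp : p.IsPath) :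
    (openNbhd (pendantAug G) {x | x ∈ p.support}).ncard ≤
      Fintype.card V + {x : V | Sum.inl x ∈ p.support}.ncard := by
  classical
  set T : Set V := {x : V | Sum.inl x ∈ p.support} with hT
  have hsub : openNbhd (pendantAug G) {x | x ∈ p.support} ⊆
      (Sum.inl '' Tᶜ ∪ (fun x : V => Sum.inr (x, false)) '' T) ∪
        (fun x : V => Sum.inr (x, true)) '' T := by
    rintro a ⟨ha1, w, hw, hadj⟩
    rw [pendantAug, SimpleGraph.fromRel_adj] at hadj
    obtain ⟨-, hrel⟩ := hadj
    match a with
    | Sum.inl x =>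
      exact Or.inl (Or.inl ⟨x, ha1, rfl⟩)
    | Sum.inr (x, b) =>
      have hx : x ∈ T := by
        match w with
        | Sum.inl y =>
          have : y = x := by
            rcases hrel with h | h
            · exact h.elim
            · exact h
          subst this
          exact hw
        | Sum.inr z =>
          rcases hrel with h | h <;> exact h.elim
      cases b
      · exact Or.inl (Or.inr ⟨x, hx, rfl⟩)
      · exact Or.inr ⟨x, hx, rfl⟩
  have h1 : (Sum.inl '' Tᶜ : Set (V ⊕ V × Bool)).ncard = Tᶜ.ncard :=
    Set.ncard_image_of_injective _ Sum.inl_injective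
  have h2 : ((fun x : V => Sum.inr (x, false)) '' T : Set (V ⊕ V × Bool)).ncard = T.ncard :=
    Set.ncard_image_of_injective _ (by intro a b h; simpa using h)
  have h3 : ((fun x : V => Sum.inr (x, true)) '' T : Set (V ⊕ V × Bool)).ncard = T.ncard :=
    Set.ncard_image_of_injective _ (by intro a b h; simpa using h)
  have hcompl : T.ncard + Tᶜ.ncard = Fintype.card V := by
    rw [Set.ncard_add_ncard_compl, Nat.card_eq_fintype_card]
  calc (openNbhd (pendantAug G) {x | x ∈ p.support}).ncard
      ≤ ((Sum.inl '' Tᶜ ∪ (fun x : V => Sum.inr (x, false)) '' T) ∪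
        (fun x : V => Sum.inr (x, true)) '' T).ncard :=
        Set.ncard_le_ncard hsub (Set.toFinite _)
    _ ≤ (Sum.inl '' Tᶜ ∪ (fun x : V => Sum.inr (x, false)) '' T).ncard
        + ((fun x : V => Sum.inr (x, true)) '' T).ncard := Set.ncard_union_le _ _
    _ ≤ ((Sum.inl '' Tᶜ : Set (V ⊕ V × Bool)).ncard
        + ((fun x : V => Sum.inr (x, false)) '' T).ncard)
        + ((fun x : V => Sum.inr (x, true)) '' T).ncard :=
        Nat.add_le_add_right (Set.ncard_union_le _ _) _
    _ = (Tᶜ.ncard + T.ncard) + T.ncard := by rw [h1, h2, h3]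
    _ ≤ Fintype.card V + T.ncard := by omega
end

section
/- Let G be a connected graph on n vertices and let G'' be its pendant-augmented graph. Then G'' contains a path P with |V(P)| ≤ n and |N_{G''}(V(P))| ≥ 2n if and only if G has a Hamiltonian path. -/
open SimpleGraph

lemma adj_inl_inl {V : Type*} {G : SimpleGraph V} {v w : V} :
    (pendantAug G).Adj (Sum.inl v) (Sum.inl w) ↔ G.Adj v w := by
  constructor
  · rintro ⟨hne, h | h⟩
    · exact h
    · exact h.symm
  · intro h
    exact ⟨by simp [h.ne], Or.inl h⟩

lemma adj_to_inr {V : Type*} {G : SimpleGraph V} {x : V ⊕ (V × Bool)} {w : V} {b : Bool}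
    (h : (pendantAug G).Adj x (Sum.inr (w, b))) : x = Sum.inl w := by
  obtain ⟨hne, h | h⟩ := h
  · cases x with
    | inl y => exact congrArg Sum.inl h
    | inr z => exact h.elim
  · exact h.elim

lemma pull {V : Type*} {G : SimpleGraph V} :
    ∀ {a b : V ⊕ (V × Bool)} (p : (pendantAug G).Walk a b),
      (∀ x ∈ p.support, ∃ y, x = Sum.inl y) →
      ∃ (u v : V) (q : G.Walk u v), a = Sum.inl u ∧ b = Sum.inl v ∧
        q.support.map Sum.inl = p.support := by
  intro a b p
  induction p with
  | nil =>
    intro h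
    obtain ⟨u, rfl⟩ := h _ (Walk.start_mem_support _)
    exact ⟨u, u, Walk.nil, rfl, rfl, rfl⟩
  | @cons a c b hadj p ih =>
    intro h
    obtain ⟨u', v, q, rfl, rfl, hq⟩ := ih (fun x hx => h x (by simp [hx]))
    obtain ⟨u, rfl⟩ := h a (Walk.start_mem_support _)
    refine ⟨u, v, Walk.cons (adj_inl_inl.mp hadj) q, rfl, rfl, ?_⟩
    simp [Walk.support_cons, hq]

/-- For a connected graph `G` on `n` vertices, the pendant-augmented graph `G''`
contains a path `P` with `|V(P)| ≤ n` and `|N_{G''}(V(P))| ≥ 2n` iff `G` has a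
Hamiltonian path. -/
theorem stmt_2 {V : Type*} [Fintype V] (G : SimpleGraph V) (hG : G.Connected) :
    (∃ (u v : V ⊕ (V × Bool)) (p : (pendantAug G).Walk u v), p.IsPath ∧
        p.support.length ≤ Fintype.card V ∧
        2 * Fintype.card V ≤ (openNbhd (pendantAug G) {x | x ∈ p.support}).ncard) ↔
      (∃ (u v : V) (p : G.Walk u v), p.IsPath ∧ ∀ w, w ∈ p.support) := by
  classical
  haveI : DecidableEq (V ⊕ (V × Bool)) := Classical.decEq _
  constructor
  · rintro ⟨u, v, p, hp, hlen, hcard⟩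
    haveI : DecidablePred (fun w : V => (Sum.inl w : V ⊕ (V × Bool)) ∈ p.support) :=
      fun _ => Classical.dec _
    haveI : DecidablePred (fun w : V => ¬ (Sum.inl w : V ⊕ (V × Bool)) ∈ p.support) :=
      fun _ => Classical.dec _
    set ksF := Finset.univ.filter (fun w : V => (Sum.inl w : V ⊕ (V × Bool)) ∈ p.support) with hksF
    set A := (ksF ×ˢ (Finset.univ : Finset Bool)).image
      (Sum.inr : V × Bool → V ⊕ (V × Bool)) with hA
    set B := (Finset.univ.filter (fun w : V => ¬ (Sum.inl w : V ⊕ (V × Bool)) ∈ p.support)).image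
      (Sum.inl : V → V ⊕ (V × Bool)) with hB
    have hsub : openNbhd (pendantAug G) {x | x ∈ p.support} ⊆ ↑(A ∪ B) := by
      rintro x ⟨hxS, w, hwS, hadj⟩
      cases x with
      | inl y =>
        simp only [Finset.coe_union, Set.mem_union]
        right
        simp only [hB, Finset.coe_image, Set.mem_image, Finset.mem_coe,
          Finset.mem_filter, Finset.mem_univ, true_and]
        exact ⟨y, hxS, rfl⟩
      | inr z =>
        obtain ⟨y, b⟩ := z
        have := adj_to_inr hadj.symm
        subst this
        simp only [Finset.coe_union, Set.mem_union]
        left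
        simp only [hA, Finset.coe_image, Set.mem_image, Finset.mem_coe,
          Finset.mem_product, Finset.mem_univ, and_true, hksF, Finset.mem_filter]
        exact ⟨(y, b), ⟨trivial, hwS⟩, rfl⟩
    have hT : (openNbhd (pendantAug G) {x | x ∈ p.support}).ncard ≤ (A ∪ B).card := by
      rw [← Set.ncard_coe_finset]
      exact Set.ncard_le_ncard hsub (A ∪ B).finite_toSet
    have hcardA : A.card = ksF.card * 2 := by
      rw [hA, Finset.card_image_of_injective _ Sum.inr_injective, Finset.card_product]
      simp
    have hcardB : B.card =
        (Finset.univ.filter (fun w : V => ¬ (Sum.inl w : V ⊕ (V × Bool)) ∈ p.support)).card := by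
      rw [hB, Finset.card_image_of_injective _ Sum.inl_injective]
    have hsplit : ksF.card +
        (Finset.univ.filter (fun w : V => ¬ (Sum.inl w : V ⊕ (V × Bool)) ∈ p.support)).card
        = Fintype.card V := by
      rw [hksF]
      exact Finset.card_filter_add_card_filter_not _
    have hunion := Finset.card_union_le A B
    have hk : ksF.card = Fintype.card V := by omega
    have hks : ksF = Finset.univ :=
      Finset.eq_univ_of_card _ hk
    have hall : ∀ w : V, Sum.inl w ∈ p.support := by
      intro w
      have : w ∈ ksF := hks ▸ Finset.mem_univ w
      exact (Finset.mem_filter.mp this).2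
    -- every support element is inl
    have hnodup : p.support.Nodup := hp.support_nodup
    have himg : (Finset.univ.image (Sum.inl : V → V ⊕ (V × Bool))) ⊆ p.support.toFinset := by
      intro x hx
      obtain ⟨w, _, rfl⟩ := Finset.mem_image.mp hx
      exact List.mem_toFinset.mpr (hall w)
    have hcard1 : (Finset.univ.image (Sum.inl : V → V ⊕ (V × Bool))).card = Fintype.card V := by
      rw [Finset.card_image_of_injective _ Sum.inl_injective, Finset.card_univ]
    have hcard2 : p.support.toFinset.card = p.support.length :=
      List.toFinset_card_of_nodup hnodup
    have heq : Finset.univ.image (Sum.inl : V → V ⊕ (V × Bool)) = p.support.toFinset := by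
      apply Finset.eq_of_subset_of_card_le himg
      rw [hcard1, hcard2]; exact hlen
    have hallinl : ∀ x ∈ p.support, ∃ y, x = Sum.inl y := by
      intro x hx
      have : x ∈ Finset.univ.image (Sum.inl : V → V ⊕ (V × Bool)) := by
        rw [heq]; exact List.mem_toFinset.mpr hx
      obtain ⟨y, _, rfl⟩ := Finset.mem_image.mp this
      exact ⟨y, rfl⟩
    obtain ⟨u', v', q, rfl, rfl, hqsupp⟩ := pull p hallinl
    refine ⟨u', v', q, ?_, ?_⟩
    · rw [Walk.isPath_def]
      have := hnodup
      rw [← hqsupp] at this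
      exact this.of_map _
    · intro w
      have := hall w
      rw [← hqsupp] at this
      obtain ⟨y, hy, hyw⟩ := List.mem_map.mp this
      rwa [← Sum.inl_injective hyw]
  · rintro ⟨u, v, q, hq, hall⟩
    let f : G →g pendantAug G := ⟨Sum.inl, fun h => adj_inl_inl.mpr h⟩
    refine ⟨Sum.inl u, Sum.inl v, q.map f, q.map_isPath_of_injective ?_ hq, ?_, ?_⟩
    · exact Sum.inl_injective
    · rw [Walk.support_map, List.length_map]
      calc q.support.length = q.support.toFinset.card :=
            (List.toFinset_card_of_nodup hq.support_nodup).symm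
        _ ≤ Fintype.card V := Finset.card_le_univ _
    · have hsub : Set.range (Sum.inr : V × Bool → V ⊕ (V × Bool)) ⊆
          openNbhd (pendantAug G) {x | x ∈ (q.map f).support} := by
        rintro _ ⟨⟨w, b⟩, rfl⟩
        refine ⟨?_, Sum.inl w, ?_, ?_⟩
        · simp [Walk.support_map, f]
        · simp only [Set.mem_setOf_eq, Walk.support_map, List.mem_map]
          exact ⟨w, hall w, rfl⟩
        · have : (pendantAug G).Adj (Sum.inl w) (Sum.inr (w, b)) := by
            rw [pendantAug, fromRel_adj]
            exact ⟨by simp, Or.inl rfl⟩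
          exact this.symm
      calc 2 * Fintype.card V
          = (Set.range (Sum.inr : V × Bool → V ⊕ (V × Bool))).ncard := by
            rw [← Nat.card_coe_set_eq, Nat.card_range_of_injective Sum.inr_injective,
              Nat.card_eq_fintype_card, Fintype.card_prod, Fintype.card_bool]
            ring
        _ ≤ _ := Set.ncard_le_ncard hsub (Set.toFinite _)
end

section
/- Let G be a graph on n ≥ 1 vertices and let G'' be its pendant-augmented graph. Then every path P in G'' with |N_{G''}(V(P))| ≥ 2n satisfies V(P) = V(G); in particular, such a path is a Hamiltonian path of G. -/
open SimpleGraph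

/-- For a graph `G` on `n ≥ 1` vertices, every path `P` in the pendant-augmented graph
`G''` with `|N_{G''}(V(P))| ≥ 2n` satisfies `V(P) = V(G)` (the set of vertices of `P`
is exactly the set of original vertices of `G`); in particular `P` is a Hamiltonian
path of `G`. -/
theorem stmt_3 {V : Type*} [Fintype V] (G : SimpleGraph V) (hn : 1 ≤ Fintype.card V)
    (u v : V ⊕ (V × Bool)) (p : (pendantAug G).Walk u v) (hp : p.IsPath)
    (hnb : 2 * Fintype.card V ≤ (openNbhd (pendantAug G) {x | x ∈ p.support}).ncard) :
    {x | x ∈ p.support} = Set.range Sum.inl := by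

  classical
  set S : Set (V ⊕ (V × Bool)) := {x | x ∈ p.support} with hS
  set A : Set V := {v | Sum.inl v ∈ S} with hA
  set n := Fintype.card V with hn'
  set N := openNbhd (pendantAug G) S with hN
  -- adjacency to a pendant vertex
  have hadj_inr : ∀ (w : V) (b : Bool) (y : V ⊕ (V × Bool)),
      (pendantAug G).Adj (Sum.inr (w, b)) y → y = Sum.inl w := by
    intro w b y h
    rw [pendantAug, SimpleGraph.fromRel_adj] at h
    obtain ⟨hne, h | h⟩ := h
    · cases y with
      | inl z => exact absurd h (by simp)
      | inr z => exact absurd h (by simp)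
    · cases y with
      | inl z => simp only at h; subst h; rfl
      | inr z => exact absurd h (by simp)
  -- T : the pendant vertices over A
  set T : Set (V ⊕ (V × Bool)) :=
    (fun v => Sum.inr (v, false)) '' A ∪ (fun v => Sum.inr (v, true)) '' A with hT
  have hTcard : T.ncard = 2 * A.ncard := by
    rw [hT, Set.ncard_union_eq ?_ (Set.toFinite _) (Set.toFinite _),
      Set.ncard_image_of_injective _ (fun a b h => by simpa using h),
      Set.ncard_image_of_injective _ (fun a b h => by simpa using h)]
    · ring
    · rw [Set.disjoint_left]
      rintro x ⟨a, _, rfl⟩ ⟨b, _, hb⟩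
      simp at hb
  -- bound on the inl-part of N
  have h1 : (N ∩ Set.range Sum.inl).ncard + A.ncard ≤ n := by
    have hsub : N ∩ Set.range Sum.inl ⊆ Sum.inl '' Aᶜ := by
      rintro x ⟨hxN, w, rfl⟩
      exact ⟨w, fun hwA => hxN.1 hwA, rfl⟩
    have h2 : (Sum.inl '' Aᶜ : Set (V ⊕ (V × Bool))).ncard = Aᶜ.ncard :=
      Set.ncard_image_of_injective _ Sum.inl_injective
    have h3 := Set.ncard_add_ncard_compl A (Set.toFinite _) (Set.toFinite _)
    have h4 : Nat.card V = n := by rw [Nat.card_eq_fintype_card]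
    have := Set.ncard_le_ncard hsub (Set.toFinite _)
    omega
  -- bound on the inr-part of N
  have h2 : (N ∩ Set.range Sum.inr).ncard + (T ∩ S).ncard ≤ 2 * A.ncard := by
    have hsub : N ∩ Set.range Sum.inr ⊆ T \ S := by
      rintro x ⟨hxN, wb, rfl⟩
      obtain ⟨w, b⟩ := wb
      obtain ⟨hxS, y, hyS, hadj⟩ := hxN
      have := hadj_inr w b y hadj
      subst this
      refine ⟨?_, hxS⟩
      cases b
      · exact Or.inl ⟨w, hyS, rfl⟩
      · exact Or.inr ⟨w, hyS, rfl⟩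
    have hd := Set.ncard_inter_add_ncard_diff_eq_ncard T S (Set.toFinite _)
    have := Set.ncard_le_ncard hsub (Set.toFinite _)
    omega
  -- combine
  have hsplit : N.ncard ≤ (N ∩ Set.range Sum.inl).ncard + (N ∩ Set.range Sum.inr).ncard := by
    have hsub : N ⊆ (N ∩ Set.range Sum.inl) ∪ (N ∩ Set.range Sum.inr) := by
      intro x hx
      cases x with
      | inl w => exact Or.inl ⟨hx, w, rfl⟩
      | inr w => exact Or.inr ⟨hx, w, rfl⟩
    calc N.ncard ≤ ((N ∩ Set.range Sum.inl) ∪ (N ∩ Set.range Sum.inr)).ncard :=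
          Set.ncard_le_ncard hsub (Set.toFinite _)
      _ ≤ _ := Set.ncard_union_le _ _
  have hAle : A.ncard ≤ n := by
    have := Set.ncard_le_ncard (Set.subset_univ A) (Set.toFinite _)
    rwa [Set.ncard_univ, Nat.card_eq_fintype_card] at this
  have hAeq : A.ncard = n := by omega
  have hTS : (T ∩ S).ncard = 0 := by omega
  have hAuniv : A = Set.univ := by
    apply Set.eq_of_subset_of_ncard_le (Set.subset_univ A) _ (Set.toFinite _)
    rw [Set.ncard_univ, Nat.card_eq_fintype_card]
    omega
  have hTSempty : T ∩ S = ∅ := (Set.ncard_eq_zero (Set.toFinite _)).mp hTS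
  ext x
  cases x with
  | inl w =>
    constructor
    · intro _; exact ⟨w, rfl⟩
    · intro _
      have : w ∈ A := hAuniv ▸ Set.mem_univ w
      exact this
  | inr wb =>
    obtain ⟨w, b⟩ := wb
    constructor
    · intro hx
      have hwA : w ∈ A := hAuniv ▸ Set.mem_univ w
      have : Sum.inr (w, b) ∈ T ∩ S := by
        refine ⟨?_, hx⟩
        cases b
        · exact Or.inl ⟨w, hwA, rfl⟩
        · exact Or.inr ⟨w, hwA, rfl⟩
      rw [hTSempty] at this
      exact absurd this (Set.notMem_empty _)
    · rintro ⟨z, hz⟩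
      exact absurd hz (by simp)
end

section
/- Let G be a graph, s and t two distinct vertices, and v a vertex of G. Suppose P is an st-path containing v whose number of vertices is minimum among all st-paths of G containing v. Then |N_G(V(P))| ≥ deg_G(v) − 2. -/
/-!
Split `P` at `v` as `Q · R`. If a neighbour `w` of `v` lies on `Q`, then cutting `Q` at `w` and
jumping straight to `v` gives another `st`-path through `v`, of length `|Q[s,w]| + 1 + |R|`;
minimality forces `w` to be the vertex just before `v`. Symmetrically, a neighbour on `R` is the
vertex just after `v`. So at most two neighbours of `v` lie on `P`, and all others lie in
`N_G(V(P))`.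
-/

open SimpleGraph

theorem ncard_neighborSet_le_ncard_inter_add_ncard_openNbhd {V : Type*} [Finite V]
    (G : SimpleGraph V) {S : Set V} {v : V} (hv : v ∈ S) :
    (G.neighborSet v).ncard ≤ (G.neighborSet v ∩ S).ncard + (openNbhd G S).ncard := by
  have hout : G.neighborSet v \ S ⊆ openNbhd G S := fun x ⟨hx, hxS⟩ => ⟨hxS, v, hv, hx.symm⟩
  calc (G.neighborSet v).ncard
      = (G.neighborSet v ∩ S ∪ G.neighborSet v \ S).ncard := by rw [Set.inter_union_sdiff]
    _ ≤ (G.neighborSet v ∩ S).ncard + (G.neighborSet v \ S).ncard := Set.ncard_union_le _ _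
    _ ≤ (G.neighborSet v ∩ S).ncard + (openNbhd G S).ncard :=
      Nat.add_le_add_left (Set.ncard_le_ncard hout) _

namespace SimpleGraph.Walk

variable {V : Type*} {G : SimpleGraph V} {s v t : V}

theorem IsPath.append_of_support_subset {q q' : G.Walk s v} {r : G.Walk v t}
    (hp : (q.append r).IsPath) (hq' : q'.IsPath) (hsub : q'.support ⊆ q.support) :
    (q'.append r).IsPath := by
  apply IsPath.mk'
  have hnd := hp.support_nodup
  rw [support_append, List.nodup_append] at hnd ⊢
  exact ⟨hq'.support_nodup, hnd.2.1, fun x hx y hy => hnd.2.2 x (hsub hx) y hy⟩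

theorem eq_penultimate_of_adj_of_minimal {q : G.Walk s v} {r : G.Walk v t}
    (hp : (q.append r).IsPath)
    (hmin : ∀ p : G.Walk s t, p.IsPath → v ∈ p.support → (q.append r).length ≤ p.length)
    {w : V} (hw : w ∈ q.support) (hadj : G.Adj w v) : w = q.penultimate := by
  classical
  have hq := hp.of_append_left
  set q₁ := q.takeUntil w hw
  have hshortcut : (q₁.concat hadj).IsPath :=
    (hq.takeUntil hw).concat (endpoint_notMem_support_takeUntil hq hw hadj.ne.symm) hadj
  have hsub : (q₁.concat hadj).support ⊆ q.support := by
    intro x hx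
    rw [support_concat, List.mem_append, List.mem_singleton] at hx
    rcases hx with hx | rfl
    · exact q.support_takeUntil_subset_support hw hx
    · exact q.end_mem_support
  have hle := hmin ((q₁.concat hadj).append r)
    (hp.append_of_support_subset hshortcut hsub) (by simp)
  have hlt : q₁.length < q.length := q.length_takeUntil_lt_length hw hadj.ne
  simp only [length_append, length_concat] at hle
  rw [penultimate, show q.length - 1 = q₁.length by omega, getVert_length_takeUntil]

theorem eq_penultimate_or_snd_of_adj_of_minimal {q : G.Walk s v} {r : G.Walk v t}
    (hp : (q.append r).IsPath)
    (hmin : ∀ p : G.Walk s t, p.IsPath → v ∈ p.support → (q.append r).length ≤ p.length)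
    {w : V} (hw : w ∈ (q.append r).support) (hadj : G.Adj v w) :
    w = q.penultimate ∨ w = r.snd := by
  rcases (mem_support_append_iff q r).mp hw with hwq | hwr
  · exact .inl (eq_penultimate_of_adj_of_minimal hp hmin hwq hadj.symm)
  · have hp' : (r.reverse.append q.reverse).IsPath := by
      rw [← reverse_append]
      exact hp.reverse
    have hmin' : ∀ p : G.Walk t s, p.IsPath → v ∈ p.support →
        (r.reverse.append q.reverse).length ≤ p.length := fun p hpath hvp => by
      simpa [← reverse_append] using hmin p.reverse hpath.reverse (by simpa using hvp)
    rw [← penultimate_reverse]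
    exact .inr (eq_penultimate_of_adj_of_minimal hp' hmin' (by simpa using hwr) hadj.symm)

end SimpleGraph.Walk

theorem stmt_14_general {V : Type*} [Fintype V] (G : SimpleGraph V) (s t v : V)
    (p : G.Walk s t) (hp : p.IsPath) (hv : v ∈ p.support)
    (hmin : ∀ q : G.Walk s t, q.IsPath → v ∈ q.support →
      p.support.length ≤ q.support.length) :
    (G.neighborSet v).ncard - 2 ≤ (openNbhd G {x | x ∈ p.support}).ncard := by
  obtain ⟨q, r, rfl⟩ := Walk.mem_support_iff_exists_append.mp hv
  have hmin' : ∀ p' : G.Walk s t, p'.IsPath → v ∈ p'.support →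
      (q.append r).length ≤ p'.length :=
    fun p' hp' hv' => by simpa [Walk.length_support] using hmin p' hp' hv'
  have hon : (G.neighborSet v ∩ {x | x ∈ (q.append r).support}).ncard ≤ 2 :=
    calc _ ≤ ({q.penultimate, r.snd} : Set V).ncard :=
          Set.ncard_le_ncard fun w hw =>
            Walk.eq_penultimate_or_snd_of_adj_of_minimal hp hmin' hw.2 hw.1
      _ ≤ 2 := (Set.ncard_insert_le _ _).trans (by rw [Set.ncard_singleton])
  have hsplit := ncard_neighborSet_le_ncard_inter_add_ncard_openNbhd G
    (S := {x | x ∈ (q.append r).support}) hv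
  omega

/-- If `P` is an `st`-path containing `v` whose number of vertices is minimum among
all `st`-paths containing `v`, then `|N_G(V(P))| ≥ deg_G(v) − 2`. -/
theorem stmt_14 {V : Type*} [Fintype V] (G : SimpleGraph V) (s t v : V) (hst : s ≠ t)
    (p : G.Walk s t) (hp : p.IsPath) (hv : v ∈ p.support)
    (hmin : ∀ q : G.Walk s t, q.IsPath → v ∈ q.support →
      p.support.length ≤ q.support.length) :
    (G.neighborSet v).ncard - 2 ≤ (openNbhd G {x | x ∈ p.support}).ncard :=
  stmt_14_general G s t v p hp hv hmin
end

section
/- Let G be a graph, s and t two distinct vertices, k ≥ 2 and ℓ ≥ 0 integers, and v a vertex of G with deg_G(v) ≥ ℓ + 2. If G contains an st-path with at most k vertices that contains v, then G contains an st-path P with |V(P)| ≤ k and |N_G(V(P))| ≥ ℓ. -/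
/-!
Take a shortest `st`-path `P` through `v`. If `v` had a neighbour `w` on `P` other than its two
neighbours along `P`, replacing the segment of `P` between `w` and `v` by the edge `wv` would give
a shorter `st`-path through `v`. So at most two neighbours of `v` lie on `P`, and the other
`deg v - 2 ≥ ℓ` neighbours of `v` belong to `N_G(V(P))`.
-/

open SimpleGraph

namespace SimpleGraph.Walk

variable {V : Type*} {G : SimpleGraph V} {u v w : V}

lemma isPath_append_iff {p : G.Walk u v} {q : G.Walk v w} :
    (p.append q).IsPath ↔ p.IsPath ∧ q.IsPath ∧ ∀ x ∈ p.support, x ∈ q.support → x = v := by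
  obtain ⟨l, hl⟩ : ∃ l, q.support = v :: l := ⟨_, (cons_tail_support q).symm⟩
  rw [isPath_def, isPath_def, isPath_def, support_append, hl, List.tail_cons, List.nodup_append',
    List.nodup_cons]
  refine ⟨fun ⟨hp, hl, hdisj⟩ ↦ ⟨hp, ⟨fun hv ↦ hdisj p.end_mem_support hv, hl⟩, ?_⟩,
    fun ⟨hp, ⟨hv, hl⟩, hmeet⟩ ↦ ⟨hp, hl, fun x hxp hxl ↦ ?_⟩⟩
  · rintro x hxp (_ | ⟨_, hxl⟩)
    · rfl
    · exact absurd hxl (hdisj hxp)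
  · exact hv (hmeet x hxp (List.mem_cons_of_mem v hxl) ▸ hxl)

lemma IsPath.append_of_support_subset_left {p p' : G.Walk u v} {q : G.Walk v w}
    (hpq : (p.append q).IsPath) (hp' : p'.IsPath) (hsub : p'.support ⊆ p.support) :
    (p'.append q).IsPath := by
  obtain ⟨-, hq, hmeet⟩ := isPath_append_iff.mp hpq
  exact isPath_append_iff.mpr ⟨hp', hq, fun x hx ↦ hmeet x (hsub hx)⟩

lemma IsPath.append_of_support_subset_right {p : G.Walk u v} {q q' : G.Walk v w}
    (hpq : (p.append q).IsPath) (hq' : q'.IsPath) (hsub : q'.support ⊆ q.support) :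
    (p.append q').IsPath := by
  obtain ⟨hp, -, hmeet⟩ := isPath_append_iff.mp hpq
  exact isPath_append_iff.mpr ⟨hp, hq', fun x hx hx' ↦ hmeet x hx (hsub hx')⟩

lemma IsPath.exists_shortcut_of_adj_end {p : G.Walk u v} (hp : p.IsPath) (hw : w ∈ p.support)
    (hadj : G.Adj w v) (hne : w ≠ p.penultimate) :
    ∃ q : G.Walk u v, q.IsPath ∧ q.support ⊆ p.support ∧ q.length < p.length := by
  classical
  have hwv : w ≠ v := hadj.ne
  refine ⟨(p.takeUntil w hw).concat hadj,
    (hp.takeUntil hw).concat (endpoint_notMem_support_takeUntil hp hw hwv.symm) hadj, ?_, ?_⟩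
  · intro x hx
    rw [support_concat, List.mem_append, List.mem_singleton] at hx
    rcases hx with hx | rfl
    · exact p.support_takeUntil_subset_support hw hx
    · exact p.end_mem_support
  · have hlt := p.length_takeUntil_lt_length hw hwv
    have hne' : (p.takeUntil w hw).length ≠ p.length - 1 := fun h ↦
      hne (h ▸ getVert_length_takeUntil hw).symm
    rw [length_concat]
    omega

lemma IsPath.exists_shortcut_of_adj_start {p : G.Walk u v} (hp : p.IsPath) (hw : w ∈ p.support)
    (hadj : G.Adj u w) (hne : w ≠ p.snd) :
    ∃ q : G.Walk u v, q.IsPath ∧ q.support ⊆ p.support ∧ q.length < p.length := by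
  obtain ⟨q, hq, hsub, hlt⟩ := (isPath_reverse_iff p).mpr hp |>.exists_shortcut_of_adj_end
    (by simpa using hw) hadj.symm (by rwa [penultimate_reverse])
  refine ⟨q.reverse, (isPath_reverse_iff q).mpr hq, fun x hx ↦ ?_, by simpa using hlt⟩
  simpa using hsub (by simpa using hx)

end SimpleGraph.Walk

namespace SimpleGraph

variable {V : Type*} {G : SimpleGraph V} {s t v : V}

open Walk in
lemma ncard_neighborSet_inter_support_le_two {p : G.Walk s t}
    (hmin : MinimalFor (fun q : G.Walk s t ↦ q.IsPath ∧ v ∈ q.support) length p) :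
    (G.neighborSet v ∩ {x | x ∈ p.support}).ncard ≤ 2 := by
  obtain ⟨⟨hp, hvp⟩, hshortest⟩ := minimalFor_iff_forall_lt.mp hmin
  obtain ⟨q, r, hq, hr, rfl⟩ := hp.mem_support_iff_exists_append.mp hvp
  have hsub : G.neighborSet v ∩ {x | x ∈ (q.append r).support} ⊆ {q.penultimate, r.snd} := by
    rintro x ⟨hadj, hx⟩
    rcases (mem_support_append_iff q r).mp hx with hx | hx
    · refine Or.inl (by_contra fun hne ↦ ?_)
      obtain ⟨q', hq', hsub, hlt⟩ := hq.exists_shortcut_of_adj_end hx hadj.symm hne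
      refine hshortest (j := q'.append r) (by simpa using hlt)
        ⟨hp.append_of_support_subset_left hq' hsub, ?_⟩
      exact (mem_support_append_iff _ _).mpr (Or.inl q'.end_mem_support)
    · refine Or.inr (by_contra fun hne ↦ ?_)
      obtain ⟨r', hr', hsub, hlt⟩ := hr.exists_shortcut_of_adj_start hx hadj hne
      refine hshortest (j := q.append r') (by simpa using hlt)
        ⟨hp.append_of_support_subset_right hr' hsub, ?_⟩
      exact (mem_support_append_iff _ _).mpr (Or.inr r'.start_mem_support)
  calc _ ≤ ({q.penultimate, r.snd} : Set V).ncard := Set.ncard_le_ncard hsub (Set.toFinite _)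
    _ ≤ 2 := (Set.ncard_insert_le _ _).trans (by simp)

lemma ncard_neighborSet_le_ncard_openNbhd_add [Finite V] {S : Set V} (hv : v ∈ S) :
    (G.neighborSet v).ncard ≤ (openNbhd G S).ncard + (G.neighborSet v ∩ S).ncard := by
  have hdiff : G.neighborSet v \ S ⊆ openNbhd G S :=
    fun x ⟨hadj, hxS⟩ ↦ ⟨hxS, v, hv, hadj.symm⟩
  rw [← Set.ncard_inter_add_ncard_sdiff_eq_ncard (G.neighborSet v) S, add_comm]
  exact Nat.add_le_add_right (Set.ncard_le_ncard hdiff) _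

end SimpleGraph

theorem stmt_15_general {V : Type*} [Fintype V] (G : SimpleGraph V) (s t v : V)
    (k ℓ : ℕ) (hv : ℓ + 2 ≤ (G.neighborSet v).ncard)
    (hex : ∃ q : G.Walk s t, q.IsPath ∧ q.support.length ≤ k ∧ v ∈ q.support) :
    ∃ p : G.Walk s t, p.IsPath ∧ p.support.length ≤ k ∧
      ℓ ≤ (openNbhd G {x | x ∈ p.support}).ncard := by
  obtain ⟨q, hq, hqk, hvq⟩ := hex
  obtain ⟨p, hmin⟩ := exists_minimalFor_of_wellFoundedLT
    (fun p : G.Walk s t ↦ p.IsPath ∧ v ∈ p.support) Walk.length ⟨q, hq, hvq⟩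
  obtain ⟨⟨hp, hvp⟩, hshortest⟩ := minimalFor_iff_forall_lt.mp hmin
  have hpq : p.length ≤ q.length := not_lt.mp fun hlt ↦ hshortest hlt ⟨hq, hvq⟩
  refine ⟨p, hp, by simp only [Walk.length_support] at hqk ⊢; omega, ?_⟩
  have hcount := ncard_neighborSet_le_ncard_openNbhd_add (G := G) (S := {x | x ∈ p.support}) hvp
  have htwo := ncard_neighborSet_inter_support_le_two hmin
  omega

/-- If `v` has degree at least `ℓ + 2` and `G` contains an `st`-path with at most `k`
vertices containing `v`, then `G` contains an `st`-path `P` with `|V(P)| ≤ k` and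
`|N_G(V(P))| ≥ ℓ`. -/
theorem stmt_15 {V : Type*} [Fintype V] (G : SimpleGraph V) (s t v : V) (hst : s ≠ t)
    (k ℓ : ℕ) (hk : 2 ≤ k) (hv : ℓ + 2 ≤ (G.neighborSet v).ncard)
    (hex : ∃ q : G.Walk s t, q.IsPath ∧ q.support.length ≤ k ∧ v ∈ q.support) :
    ∃ p : G.Walk s t, p.IsPath ∧ p.support.length ≤ k ∧
      ℓ ≤ (openNbhd G {x | x ∈ p.support}).ncard :=
  stmt_15_general G s t v k ℓ hv hex
end
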